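/- Let G be a graph containing an edge vw with deg_G(v) = 1 and deg_G(w) = 2. Then γ_WC(G) = 1 + γ_WC(G − {v, w}) and s_WC(G) = 1 + s_WC(G − {v, w}). -/

import Mathlib

/-- `D` is a dominating set of `G`. -/
def IsDomSet {V : Type} (G : SimpleGraph V) (D : Set V) : Prop :=
  ∀ v, v ∈ D ∨ ∃ u ∈ D, G.Adj u v

/-- The unbiased Waiter-Client game on the hypergraph with winning sets `F`.
`wcWin F t W C` means: with Waiter owning `W` and Client owning `C`, Waiter has
a strategy to claim all elements of some winning set within at most `t` further
rounds. In each round Waiter offers two unclaimed elements; Client keeps one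
and the other goes to Waiter (a final single unclaimed element would go to
Client, so it can never help Waiter). -/
def wcWin {X : Type} (F : Set (Set X)) : ℕ → Set X → Set X → Prop
  | 0, W, _ => ∃ e ∈ F, e ⊆ W
  | (t+1), W, C => (∃ e ∈ F, e ⊆ W) ∨
      ∃ x y, x ≠ y ∧ x ∉ W ∪ C ∧ y ∉ W ∪ C ∧
        wcWin F t (insert x W) (insert y C) ∧ wcWin F t (insert y W) (insert x C)

/-- `γ_WC(G)`: the minimum number of rounds within which Dominator (as Waiter)
can guarantee to claim a dominating set in the Waiter-Client domination game on
`G`, and `⊤` (infinity) if she cannot win at all. -/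
noncomputable def gammaWC {V : Type} [Finite V] (G : SimpleGraph V) : ℕ∞ :=
  sInf {n : ℕ∞ | ∃ t : ℕ, n = t ∧ wcWin {D : Set V | IsDomSet G D} t ∅ ∅}

/-- `s_WC(G)`: the minimum size of a dominating set Dominator (as Waiter) can
guarantee to claim in the Waiter-Client domination game on `G` (with no bound
on the number of rounds, `Nat.card V` rounds being enough to exhaust the
board), and `⊤` (infinity) if she cannot win at all. -/
noncomputable def sizeWC {V : Type} [Finite V] (G : SimpleGraph V) : ℕ∞ :=
  sInf {n : ℕ∞ | ∃ s : ℕ, n = s ∧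
    wcWin {D : Set V | IsDomSet G D ∧ D.ncard ≤ s} (Nat.card V) ∅ ∅}

/-! Client answers every offer containing exactly one of `v`, `w` by taking that vertex; once
she holds one of them Waiter can never claim the other, so the leaf `v` stays undominated.
Hence Waiter has to offer `{v, w}` as a pair at some point, and in the branch where she gets `v`
and Client gets `w` the other rounds are exactly a game on `G - {v, w}`: since `v` dominates
only itself and `w`, a set containing `v` but not `w` dominates `G` iff the rest of it
dominates `G - {v, w}`. The pair round is the extra `1`, both in rounds and in size.
Conversely, Waiter can offer `{v, w}` first and then play her strategy for `G - {v, w}`. -/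

theorem ncard_preimage_val_lt {X : Type} {s t : Set X} (ht : t.Finite) {z : X} (hz : z ∈ t)
    (hzs : z ∉ s) : (Subtype.val ⁻¹' t : Set s).ncard < t.ncard := by
  rw [← Set.ncard_image_of_injective _ Subtype.val_injective, Subtype.image_preimage_coe]
  exact Set.ncard_lt_ncard ⟨Set.inter_subset_right, fun h => hzs (h hz).1⟩ ht

section Game

variable {X : Type} {F : Set (Set X)}

theorem wcWin.nonempty {t : ℕ} {W C : Set X} (h : wcWin F t W C) : F.Nonempty := by
  induction t generalizing W C with
  | zero => obtain ⟨e, he, -⟩ := h; exact ⟨e, he⟩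
  | succ t ih =>
    rcases h with ⟨e, he, -⟩ | ⟨_, _, _, _, _, h₁, _⟩
    · exact ⟨e, he⟩
    · exact ih h₁

theorem wcWin.succ {t : ℕ} {W C : Set X} (h : wcWin F t W C) : wcWin F (t + 1) W C := by
  induction t generalizing W C with
  | zero => exact Or.inl h
  | succ t ih =>
    rcases h with h | ⟨x, y, hxy, hx, hy, h₁, h₂⟩
    · exact Or.inl h
    · exact Or.inr ⟨x, y, hxy, hx, hy, ih h₁, ih h₂⟩

theorem ncard_compl_union_insert_insert_add_two [Finite X] {x y : X} {W C : Set X} (hxy : x ≠ y)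
    (hx : x ∉ W ∪ C) (hy : y ∉ W ∪ C) :
    (insert x W ∪ insert y C)ᶜ.ncard + 2 = (W ∪ C)ᶜ.ncard := by
  have hxy_sub : ({x, y} : Set X) ⊆ (W ∪ C)ᶜ :=
    Set.insert_subset hx (Set.singleton_subset_iff.2 hy)
  have hcompl : (insert x W ∪ insert y C)ᶜ = (W ∪ C)ᶜ \ {x, y} := by
    ext z
    simp only [Set.mem_compl_iff, Set.mem_union, Set.mem_insert_iff, Set.mem_sdiff,
      Set.mem_singleton_iff]
    tauto
  have htwo : 2 ≤ (W ∪ C)ᶜ.ncard := Set.ncard_pair hxy ▸ Set.ncard_le_ncard hxy_sub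
  rw [hcompl, Set.ncard_sdiff hxy_sub, Set.ncard_pair hxy]
  omega

/-- Every round uses up two unclaimed elements, so with at most `2t + 1` of them a
`(t + 1)`-st round can never be completed. -/
theorem wcWin_succ_iff_of_ncard_compl_le [Finite X] {t : ℕ} {W C : Set X}
    (hcard : (W ∪ C)ᶜ.ncard ≤ 2 * t + 1) : wcWin F (t + 1) W C ↔ wcWin F t W C := by
  refine ⟨fun h => ?_, wcWin.succ⟩
  induction t generalizing W C with
  | zero =>
    rcases h with h | ⟨x, y, hxy, hx, hy, -, -⟩
    · exact h
    · have := ncard_compl_union_insert_insert_add_two hxy hx hy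
      omega
  | succ t ih =>
    rcases h with h | ⟨x, y, hxy, hx, hy, h₁, h₂⟩
    · exact Or.inl h
    · have h₁card := ncard_compl_union_insert_insert_add_two hxy hx hy
      have h₂card := ncard_compl_union_insert_insert_add_two hxy.symm hy hx
      exact Or.inr ⟨x, y, hxy, hx, hy, ih (by omega) h₁, ih (by omega) h₂⟩

/-- Client takes an element outside `s` whenever one is offered; as at most one of them is
still unclaimed, Waiter never gets one, so she never completes a winning set. -/
theorem not_wcWin_of_forall_not_subset {s : Set X} (hF : ∀ e ∈ F, ¬ e ⊆ s) {t : ℕ}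
    {W C : Set X} (hW : W ⊆ s) (hC : (sᶜ \ C).Subsingleton) : ¬ wcWin F t W C := by
  induction t generalizing W C with
  | zero => exact fun ⟨e, he, heW⟩ => hF e he (heW.trans hW)
  | succ t ih =>
    rintro (⟨e, he, heW⟩ | ⟨x, y, hxy, hx, hy, h₁, h₂⟩)
    · exact hF e he (heW.trans hW)
    have hC' {z : X} : (sᶜ \ insert z C).Subsingleton :=
      hC.anti (Set.sdiff_subset_sdiff_right (Set.subset_insert _ _))
    by_cases hxs : x ∈ s
    · exact ih (Set.insert_subset hxs hW) hC' h₁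
    · have hys : y ∈ s := by
        by_contra hys
        exact hxy (hC ⟨hxs, fun h => hx (Or.inr h)⟩ ⟨hys, fun h => hy (Or.inr h)⟩)
      exact ih (Set.insert_subset hys hW) hC' h₂

end Game

section Restrict

variable {X : Type} {s : Set X} {F : Set (Set X)} {F' : Set (Set s)}

theorem val_mem_insert_image_union_iff {a b : X} (ha : a ∉ s) (hb : b ∉ s) {x : s}
    {W' C' : Set s} :
    (x : X) ∈ insert a (Subtype.val '' W') ∪ insert b (Subtype.val '' C') ↔ x ∈ W' ∪ C' := by
  have hxa : (x : X) ≠ a := fun h => ha (h ▸ x.2)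
  have hxb : (x : X) ≠ b := fun h => hb (h ▸ x.2)
  simp [hxa, hxb]

theorem insert_insert_image_val (x : s) (a : X) (W' : Set s) :
    insert (x : X) (insert a (Subtype.val '' W')) = insert a (Subtype.val '' insert x W') := by
  rw [Set.image_insert_eq, Set.insert_comm]

theorem wcWin_extend {a b : X} (ha : a ∉ s) (hb : b ∉ s)
    (hF' : ∀ e' ∈ F', insert a (Subtype.val '' e') ∈ F) {t : ℕ} {W' C' : Set s}
    (h : wcWin F' t W' C') :
    wcWin F t (insert a (Subtype.val '' W')) (insert b (Subtype.val '' C')) := by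
  have leaf {W' : Set s} (h : ∃ e' ∈ F', e' ⊆ W') :
      ∃ e ∈ F, e ⊆ insert a (Subtype.val '' W') :=
    let ⟨e', he', heW⟩ := h
    ⟨_, hF' e' he', Set.insert_subset_insert (Set.image_mono heW)⟩
  induction t generalizing W' C' with
  | zero => exact leaf h
  | succ t ih =>
    rcases h with h | ⟨x, y, hxy, hx, hy, h₁, h₂⟩
    · exact Or.inl (leaf h)
    refine Or.inr ⟨x, y, Subtype.val_injective.ne hxy,
      (val_mem_insert_image_union_iff ha hb).not.2 hx,
      (val_mem_insert_image_union_iff ha hb).not.2 hy, ?_, ?_⟩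
    · rw [insert_insert_image_val, insert_insert_image_val]
      exact ih h₁
    · rw [insert_insert_image_val, insert_insert_image_val]
      exact ih h₂

section Pair

variable {a b : X}

theorem notMem_of_compl_eq_pair_left (hs : sᶜ = {a, b}) : a ∉ s :=
  (hs ▸ Set.mem_insert a {b} : a ∈ sᶜ)

theorem notMem_of_compl_eq_pair_right (hs : sᶜ = {a, b}) : b ∉ s :=
  (hs ▸ Set.mem_insert_of_mem a rfl : b ∈ sᶜ)

theorem eq_or_eq_of_compl_eq_pair (hs : sᶜ = {a, b}) {x : X} (hx : x ∉ s) : x = a ∨ x = b :=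
  (hs ▸ hx : x ∈ ({a, b} : Set X))

theorem wcWin_restrict (hab : a ≠ b) (hs : sᶜ = {a, b})
    (hF : ∀ e ∈ F, b ∉ e → Subtype.val ⁻¹' e ∈ F') {t : ℕ} {W' C' : Set s}
    (h : wcWin F t (insert a (Subtype.val '' W')) (insert b (Subtype.val '' C'))) :
    wcWin F' t W' C' := by
  have ha := notMem_of_compl_eq_pair_left hs
  have hb := notMem_of_compl_eq_pair_right hs
  have leaf {W' : Set s} (h : ∃ e ∈ F, e ⊆ insert a (Subtype.val '' W')) :
      ∃ e' ∈ F', e' ⊆ W' := by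
    obtain ⟨e, he, heW⟩ := h
    have hbe : b ∉ e := fun hbe => by
      rcases heW hbe with hba | ⟨u, -, rfl⟩
      exacts [hab hba.symm, hb u.2]
    refine ⟨_, hF e he hbe, fun u hu => ?_⟩
    rcases heW hu with hua | hu
    exacts [(ha (hua ▸ u.2)).elim, Subtype.val_injective.mem_set_image.1 hu]
  induction t generalizing W' C' with
  | zero => exact leaf h
  | succ t ih =>
    rcases h with h | ⟨x, y, hxy, hx, hy, h₁, h₂⟩
    · exact Or.inl (leaf h)
    have mem_s {z : X}
        (hz : z ∉ insert a (Subtype.val '' W') ∪ insert b (Subtype.val '' C')) : z ∈ s := by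
      by_contra hzs
      rcases eq_or_eq_of_compl_eq_pair hs hzs with rfl | rfl <;> simp at hz
    lift x to s using mem_s hx
    lift y to s using mem_s hy
    rw [insert_insert_image_val, insert_insert_image_val] at h₁ h₂
    exact Or.inr ⟨x, y, fun h => hxy (congrArg _ h),
      (val_mem_insert_image_union_iff ha hb).not.1 hx,
      (val_mem_insert_image_union_iff ha hb).not.1 hy, ih h₁, ih h₂⟩

theorem subsingleton_pair_sdiff_insert {y : X} (hy : y ∈ ({a, b} : Set X)) (C : Set X) :
    (({a, b} : Set X) \ insert y C).Subsingleton := by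
  rintro p ⟨hp, hpy⟩ q ⟨hq, hqy⟩
  simp only [Set.mem_insert_iff, Set.mem_singleton_iff, not_or] at hy hp hpy hq hqy
  grind

/-- Client takes the offered vertex outside `s`, which loses for Waiter unless the offer is
`{a, b}`; then Waiter gets `a` in one of the two branches. -/
theorem wcWin_restrict_of_offer_notMem (hab : a ≠ b) (hs : sᶜ = {a, b})
    (hcover : ∀ e ∈ F, ¬ e ⊆ s) (hF : ∀ e ∈ F, b ∉ e → Subtype.val ⁻¹' e ∈ F')
    {t : ℕ} {W' C' : Set s} {x y : X} (hxy : x ≠ y) (hy : y ∉ s)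
    (h₁ : wcWin F t (insert x (Subtype.val '' W')) (insert y (Subtype.val '' C')))
    (h₂ : wcWin F t (insert y (Subtype.val '' W')) (insert x (Subtype.val '' C'))) :
    wcWin F' t W' C' := by
  by_cases hxs : x ∈ s
  · refine (not_wcWin_of_forall_not_subset hcover
      (Set.insert_subset hxs (Subtype.coe_image_subset s W')) ?_ h₁).elim
    rw [hs]
    exact subsingleton_pair_sdiff_insert (hs ▸ hy) _
  · rcases eq_or_eq_of_compl_eq_pair hs hxs with rfl | rfl <;>
      rcases eq_or_eq_of_compl_eq_pair hs hy with rfl | rfl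
    exacts [(hxy rfl).elim, wcWin_restrict hab hs hF h₁, wcWin_restrict hab hs hF h₂,
      (hxy rfl).elim]

theorem exists_wcWin_restrict (hab : a ≠ b) (hs : sᶜ = {a, b})
    (hcover : ∀ e ∈ F, ¬ e ⊆ s) (hF : ∀ e ∈ F, b ∉ e → Subtype.val ⁻¹' e ∈ F')
    {t : ℕ} {W' C' : Set s} (h : wcWin F t (Subtype.val '' W') (Subtype.val '' C')) :
    ∃ t', t = t' + 1 ∧ wcWin F' t' W' C' := by
  have no_leaf {W' : Set s} : ¬ ∃ e ∈ F, e ⊆ Subtype.val '' W' :=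
    fun ⟨e, he, heW⟩ => hcover e he (heW.trans (Subtype.coe_image_subset s W'))
  induction t generalizing W' C' with
  | zero => exact (no_leaf h).elim
  | succ t ih =>
    rcases h with h | ⟨x, y, hxy, hx, hy, h₁, h₂⟩
    · exact (no_leaf h).elim
    refine ⟨t, rfl, ?_⟩
    by_cases hys : y ∉ s
    · exact wcWin_restrict_of_offer_notMem hab hs hcover hF hxy hys h₁ h₂
    by_cases hxs : x ∉ s
    · exact wcWin_restrict_of_offer_notMem hab hs hcover hF hxy.symm hxs h₂ h₁
    lift x to s using not_not.1 hxs
    lift y to s using not_not.1 hys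
    rw [← Set.image_insert_eq, ← Set.image_insert_eq] at h₁ h₂
    obtain ⟨t', rfl, h₁'⟩ := ih h₁
    obtain ⟨_, ht, h₂'⟩ := ih h₂
    cases Nat.succ_injective ht
    exact Or.inr ⟨x, y, fun h => hxy (congrArg _ h), by simpa using hx, by simpa using hy,
      h₁', h₂'⟩

theorem wcWin_succ_empty_iff_restrict (hab : a ≠ b) (hs : sᶜ = {a, b})
    (hcover : ∀ e ∈ F, ¬ e ⊆ s) (hF : ∀ e ∈ F, b ∉ e → Subtype.val ⁻¹' e ∈ F')
    (hF' : ∀ z ∉ s, ∀ e' ∈ F', insert z (Subtype.val '' e') ∈ F) {t : ℕ} :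
    wcWin F (t + 1) ∅ ∅ ↔ wcWin F' t ∅ ∅ := by
  have ha := notMem_of_compl_eq_pair_left hs
  have hb := notMem_of_compl_eq_pair_right hs
  constructor
  · intro h
    rw [← Set.image_empty Subtype.val] at h
    obtain ⟨t', ht, h⟩ := exists_wcWin_restrict hab hs hcover hF h
    cases Nat.succ_injective ht
    exact h
  · intro h
    have h₁ := wcWin_extend ha hb (hF' a ha) h
    have h₂ := wcWin_extend hb ha (hF' b hb) h
    rw [Set.image_empty] at h₁ h₂
    exact Or.inr ⟨a, b, hab, by simp, by simp, h₁, h₂⟩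

end Pair

end Restrict

theorem sInf_setOf_natCast_eq_one_add {P Q : ℕ → Prop} (h0 : ¬ P 0)
    (hsucc : ∀ t, P (t + 1) ↔ Q t) :
    sInf {n : ℕ∞ | ∃ t : ℕ, n = t ∧ P t} = 1 + sInf {n : ℕ∞ | ∃ t : ℕ, n = t ∧ Q t} := by
  have hP : {n : ℕ∞ | ∃ t : ℕ, n = t ∧ P t} = (1 + ·) '' {n : ℕ∞ | ∃ t : ℕ, n = t ∧ Q t} := by
    ext n
    constructor
    · rintro ⟨_ | t, rfl, hPt⟩
      · exact (h0 hPt).elim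
      · exact ⟨t, ⟨t, rfl, (hsucc t).1 hPt⟩, by push_cast; ring⟩
    · rintro ⟨_, ⟨t, rfl, hQt⟩, rfl⟩
      exact ⟨t + 1, by push_cast; ring, (hsucc t).2 hQt⟩
  rw [hP, sInf_image, ENat.add_sInf]

section Domination

variable {V : Type} {G : SimpleGraph V} {D : Set V}

theorem IsDomSet.preimage_val {s : Set V} (hD : IsDomSet G D)
    (hs : ∀ z ∈ D, z ∉ s → ∀ u ∈ s, ¬ G.Adj z u) :
    IsDomSet (G.induce s) (Subtype.val ⁻¹' D) := by
  intro u
  refine (hD u).imp id fun ⟨z, hz, hzu⟩ => ?_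
  by_cases hzs : z ∈ s
  · exact ⟨⟨z, hzs⟩, hz, hzu⟩
  · exact (hs z hz hzs u u.2 hzu).elim

theorem IsDomSet.insert_image_val {s : Set V} {D' : Set s} {z : V}
    (hD' : IsDomSet (G.induce s) D') (hz : ∀ u ∉ s, u = z ∨ G.Adj z u) :
    IsDomSet G (insert z (Subtype.val '' D')) := by
  intro u
  by_cases hus : u ∈ s
  · rcases hD' ⟨u, hus⟩ with hu | ⟨z', hz', hz'u⟩
    · exact Or.inl (Set.mem_insert_of_mem _ ⟨_, hu, rfl⟩)
    · exact Or.inr ⟨z', Set.mem_insert_of_mem _ ⟨z', hz', rfl⟩, hz'u⟩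
  · rcases hz u hus with rfl | hzu
    · exact Or.inl (Set.mem_insert _ _)
    · exact Or.inr ⟨z, Set.mem_insert _ _, hzu⟩

section Leaf

variable {v w : V}

theorem adj_of_neighborSet_eq_singleton (hN : G.neighborSet v = {w}) : G.Adj v w := by
  rw [← SimpleGraph.mem_neighborSet, hN]
  rfl

theorem IsDomSet.mem_or_mem_of_neighborSet_eq_singleton (hN : G.neighborSet v = {w})
    (hD : IsDomSet G D) : v ∈ D ∨ w ∈ D := by
  refine (hD v).imp_right fun ⟨u, hu, huv⟩ => ?_
  have hu' : u ∈ G.neighborSet v := huv.symm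
  rw [hN, Set.mem_singleton_iff] at hu'
  exact hu' ▸ hu

theorem IsDomSet.not_subset_compl_pair (hN : G.neighborSet v = {w}) (hD : IsDomSet G D) :
    ¬ D ⊆ {v, w}ᶜ := fun hDs =>
  (hD.mem_or_mem_of_neighborSet_eq_singleton hN).elim (fun hv => hDs hv (by simp))
    (fun hw => hDs hw (by simp))

theorem IsDomSet.induce_compl_pair (hN : G.neighborSet v = {w}) (hD : IsDomSet G D)
    (hw : w ∉ D) : IsDomSet (G.induce {v, w}ᶜ) (Subtype.val ⁻¹' D) := by
  refine hD.preimage_val fun z hz hzs u hu hzu => ?_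
  have hzv : z = v := by
    simp only [Set.mem_compl_iff, Set.mem_insert_iff, Set.mem_singleton_iff, not_or,
      not_and_or, not_not] at hzs
    exact hzs.resolve_right fun hzw => hw (hzw ▸ hz)
  have huw : u ∈ G.neighborSet v := hzv ▸ hzu
  rw [hN, Set.mem_singleton_iff] at huw
  exact hu (by simp [huw])

theorem IsDomSet.insert_image_compl_pair (hN : G.neighborSet v = {w}) {z : V}
    (hz : z ∉ ({v, w}ᶜ : Set V)) {D' : Set ({v, w}ᶜ : Set V)}
    (hD' : IsDomSet (G.induce {v, w}ᶜ) D') : IsDomSet G (insert z (Subtype.val '' D')) := by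
  have hvw := adj_of_neighborSet_eq_singleton hN
  refine hD'.insert_image_val fun u hu => ?_
  simp only [Set.mem_compl_iff, Set.mem_insert_iff, Set.mem_singleton_iff, not_or,
    not_and_or, not_not] at hz hu
  rcases hz with rfl | rfl <;> rcases hu with rfl | rfl
  exacts [Or.inl rfl, Or.inr hvw, Or.inr hvw.symm, Or.inl rfl]

end Leaf

end Domination

section Reduction

variable {V : Type} [Finite V] {G : SimpleGraph V} {v w : V}

theorem gammaWC_eq_one_add_of_neighborSet_eq_singleton (hN : G.neighborSet v = {w}) :
    gammaWC G = 1 + gammaWC (G.induce ({v, w}ᶜ : Set V)) := by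
  refine sInf_setOf_natCast_eq_one_add
    (fun ⟨D, hD, hD0⟩ => hD.not_subset_compl_pair hN (hD0.trans (Set.empty_subset _)))
    fun t => ?_
  exact wcWin_succ_empty_iff_restrict (adj_of_neighborSet_eq_singleton hN).ne (compl_compl _)
    (fun D hD => hD.not_subset_compl_pair hN) (fun D hD hw => hD.induce_compl_pair hN hw)
    (fun z hz D' hD' => hD'.insert_image_compl_pair hN hz)

theorem sizeWC_eq_one_add_of_neighborSet_eq_singleton (hN : G.neighborSet v = {w}) :
    sizeWC G = 1 + sizeWC (G.induce ({v, w}ᶜ : Set V)) := by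
  have hvw := (adj_of_neighborSet_eq_singleton hN).ne
  have hcard : Nat.card V = Nat.card ({v, w}ᶜ : Set V) + 1 + 1 := by
    rw [Nat.card_coe_set_eq, ← Set.ncard_add_ncard_compl {v, w}, Set.ncard_pair hvw]
    omega
  refine sInf_setOf_natCast_eq_one_add (fun h => ?_) fun k => ?_
  · obtain ⟨D, hD, hD0⟩ := h.nonempty
    rw [Nat.le_zero, Set.ncard_eq_zero] at hD0
    exact hD.not_subset_compl_pair hN (hD0 ▸ Set.empty_subset _)
  rw [hcard]
  refine (wcWin_succ_empty_iff_restrict hvw (compl_compl _) ?_ ?_ ?_).trans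
    (wcWin_succ_iff_of_ncard_compl_le ?_)
  · exact fun D hD => hD.1.not_subset_compl_pair hN
  · rintro D ⟨hD, hDk⟩ hw
    have hv := (hD.mem_or_mem_of_neighborSet_eq_singleton hN).resolve_right hw
    have := ncard_preimage_val_lt (Set.toFinite D) hv (by simp : v ∉ ({v, w}ᶜ : Set V))
    exact ⟨hD.induce_compl_pair hN hw, by omega⟩
  · rintro z hz D' ⟨hD', hD'k⟩
    refine ⟨hD'.insert_image_compl_pair hN hz, (Set.ncard_insert_le _ _).trans ?_⟩
    rw [Set.ncard_image_of_injective _ Subtype.val_injective]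
    omega
  · simp only [Set.union_empty, Set.compl_empty, Set.ncard_univ]
    omega

end Reduction

theorem wc_domination_leaf_reduction_general {V : Type} [Finite V] (G : SimpleGraph V)
    (v w : V) (hvw : G.Adj v w)
    (hv : (G.neighborSet v).ncard = 1) :
    gammaWC G = 1 + gammaWC (G.induce ({v, w}ᶜ : Set V)) ∧
    sizeWC G = 1 + sizeWC (G.induce ({v, w}ᶜ : Set V)) := by
  obtain ⟨u, hu⟩ := Set.ncard_eq_one.1 hv
  have hN : G.neighborSet v = {w} := by
    rw [hu, Set.eq_of_mem_singleton (hu ▸ hvw : w ∈ ({u} : Set V))]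
  exact ⟨gammaWC_eq_one_add_of_neighborSet_eq_singleton hN,
    sizeWC_eq_one_add_of_neighborSet_eq_singleton hN⟩

/-- Lemma 4.1. If `G` contains an edge `vw` with
`deg(v) = 1` and `deg(w) = 2`, then `γ_WC(G) = 1 + γ_WC(G - {v, w})` and
`s_WC(G) = 1 + s_WC(G - {v, w})`. -/
theorem wc_domination_leaf_reduction {V : Type} [Finite V] (G : SimpleGraph V)
    (v w : V) (hvw : G.Adj v w)
    (hv : (G.neighborSet v).ncard = 1) (hw : (G.neighborSet w).ncard = 2) :
    gammaWC G = 1 + gammaWC (G.induce ({v, w}ᶜ : Set V)) ∧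
    sizeWC G = 1 + sizeWC (G.induce ({v, w}ᶜ : Set V)) :=
  wc_domination_leaf_reduction_general G v w hvw hv
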